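/- arXiv:1706.08712 — 3 statements merged into one kernel-verified Lean document; each statement's English description precedes it below -/
import Mathlib

section
/- For all real x with 0 < |x| < 1, the quantity |sqrt(tanh(x)/x) - (1 - x^2/6)| is bounded by C·x^4 for some absolute constant C. -/
lemma exp_taylor5 (x : ℝ) (hx : |x| ≤ 1) :
    |Real.exp x - (1 + x + x^2/2 + x^3/6 + x^4/24 + x^5/120)| ≤ |x|^5 * (7/4320) := by
  have h := Real.exp_bound hx (n := 6) (by norm_num)
  have hsum : (∑ m ∈ Finset.range 6, x ^ m / (m.factorial : ℝ)) =
      1 + x + x^2/2 + x^3/6 + x^4/24 + x^5/120 := by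
    norm_num [Finset.sum_range_succ, Nat.factorial]
  rw [hsum] at h
  have h6 : |x|^6 ≤ |x|^5 := pow_le_pow_of_le_one (abs_nonneg x) hx (by norm_num)
  refine h.trans ?_
  have hc : ((Nat.succ 6 : ℕ) : ℝ) / (((Nat.factorial 6 : ℕ) : ℝ) * (6:ℕ)) = 7/4320 := by
    norm_num [Nat.factorial]
  rw [hc]
  nlinarith [abs_nonneg x]

lemma combo_bound (x u v : ℝ) (hx : |x| ≤ 1)
    (h1 : |u| ≤ |x|^5 * (7/4320)) (h2 : |v| ≤ |x|^5 * (7/4320)) :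
    |(u*(1 - x + x^3/3) - v*(1 + x - x^3/3) + (4/15*x^5 + 1/36*x^7))/2| ≤ |x|^5 / 6 := by
  have hxm1 : -1 ≤ x := neg_le_of_abs_le hx
  have hx1 : x ≤ 1 := le_of_abs_le hx
  have h5 : (0:ℝ) ≤ |x|^5 := pow_nonneg (abs_nonneg x) 5
  have hx3 : |x^3| ≤ 1 := by
    rw [abs_pow]; exact pow_le_one₀ (abs_nonneg x) hx
  obtain ⟨hx3a, hx3b⟩ := abs_le.mp hx3
  have hA : |1 - x + x^3/3| ≤ 7/3 := by
    rw [abs_le]; constructor <;> linarith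
  have hB : |1 + x - x^3/3| ≤ 7/3 := by
    rw [abs_le]; constructor <;> linarith
  have hQ : |4/15*x^5 + 1/36*x^7| ≤ (4/15 + 1/36) * |x|^5 := by
    have he : |4/15*x^5 + 1/36*x^7| = |x|^5 * |4/15 + 1/36*x^2| := by
      rw [← abs_pow x 5, ← abs_mul]; ring_nf
    rw [he]
    have hx2 : x^2 ≤ 1 := by nlinarith
    have hq2 : |4/15 + 1/36*x^2| ≤ 4/15 + 1/36 := by
      rw [abs_le]; constructor <;> nlinarith
    nlinarith
  have tri : |u*(1 - x + x^3/3) - v*(1 + x - x^3/3) + (4/15*x^5 + 1/36*x^7)|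
      ≤ |u| * |1 - x + x^3/3| + |v| * |1 + x - x^3/3| + |4/15*x^5 + 1/36*x^7| := by
    have t1 := abs_add_le (u*(1 - x + x^3/3) - v*(1 + x - x^3/3)) (4/15*x^5 + 1/36*x^7)
    have t2 := abs_add_le (u*(1 - x + x^3/3)) (-(v*(1 + x - x^3/3)))
    rw [abs_neg, ← sub_eq_add_neg, abs_mul, abs_mul] at t2
    linarith
  rw [abs_div, abs_two]
  have hub : |u| * |1 - x + x^3/3| ≤ (|x|^5 * (7/4320)) * (7/3) :=
    mul_le_mul h1 hA (abs_nonneg _) (by positivity)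
  have hvb : |v| * |1 + x - x^3/3| ≤ (|x|^5 * (7/4320)) * (7/3) :=
    mul_le_mul h2 hB (abs_nonneg _) (by positivity)
  linarith

lemma tanh_taylor (x : ℝ) (hx : |x| ≤ 1) :
    |Real.tanh x - (x - x^3/3)| ≤ |x|^5 / 6 := by
  obtain ⟨u, hu, h1⟩ : ∃ u, Real.exp x = u + (1 + x + x^2/2 + x^3/6 + x^4/24 + x^5/120) ∧
      |u| ≤ |x|^5 * (7/4320) :=
    ⟨Real.exp x - (1 + x + x^2/2 + x^3/6 + x^4/24 + x^5/120), by ring, exp_taylor5 x hx⟩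
  obtain ⟨v, hv, h2⟩ : ∃ v, Real.exp (-x) = v + (1 + (-x) + (-x)^2/2 + (-x)^3/6 + (-x)^4/24 + (-x)^5/120) ∧
      |v| ≤ |x|^5 * (7/4320) := by
    refine ⟨Real.exp (-x) - (1 + (-x) + (-x)^2/2 + (-x)^3/6 + (-x)^4/24 + (-x)^5/120), by ring, ?_⟩
    have h := exp_taylor5 (-x) (by rwa [abs_neg])
    rwa [abs_neg] at h
  have key : |Real.sinh x - (x - x^3/3) * Real.cosh x| ≤ |x|^5 / 6 := by
    have identity : Real.sinh x - (x - x^3/3) * Real.cosh x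
        = (u*(1 - x + x^3/3) - v*(1 + x - x^3/3) + (4/15*x^5 + 1/36*x^7))/2 := by
      rw [Real.sinh_eq, Real.cosh_eq, hu, hv]; ring
    rw [identity]
    exact combo_bound x u v hx h1 h2
  have hc1 : 1 ≤ Real.cosh x := Real.one_le_cosh x
  have hc0 : (0:ℝ) < Real.cosh x := Real.cosh_pos x
  rw [Real.tanh_eq_sinh_div_cosh]
  have heq : Real.sinh x / Real.cosh x - (x - x^3/3)
      = (Real.sinh x - (x - x^3/3) * Real.cosh x) / Real.cosh x := by
    field_simp
  rw [heq, abs_div, abs_of_pos hc0]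
  calc |Real.sinh x - (x - x^3/3) * Real.cosh x| / Real.cosh x
      ≤ |Real.sinh x - (x - x^3/3) * Real.cosh x| / 1 := by
        gcongr
    _ ≤ |x|^5/6 := by rw [div_one]; exact key


lemma sqrt_step (t y : ℝ) (ht0 : 0 ≤ t) (hy0 : 0 ≤ y) (hy1 : y ≤ 1)
    (hdiv : |t - (1 - y/3)| ≤ y^2/6) :
    |Real.sqrt t - (1 - y/6)| ≤ y^2 := by
  have hb : (5:ℝ)/6 ≤ 1 - y/6 := by linarith
  have hs0 : 0 ≤ Real.sqrt t := Real.sqrt_nonneg t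
  have hsq : Real.sqrt t ^ 2 = t := Real.sq_sqrt ht0
  have hkey : |Real.sqrt t - (1 - y/6)| * (Real.sqrt t + (1 - y/6)) = |t - (1 - y/6)^2| := by
    have hsum : 0 ≤ Real.sqrt t + (1 - y/6) := by linarith
    rw [← abs_of_nonneg hsum, ← abs_mul]
    congr 1
    nlinarith [hsq]
  have hy2 : (0:ℝ) ≤ y^2 := sq_nonneg y
  have htb : |t - (1 - y/6)^2| ≤ 7/36 * y^2 := by
    have hsplit : t - (1 - y/6)^2 = (t - (1 - y/3)) + (- (y^2)/36) := by ring
    rw [hsplit]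
    have habs4 : |(- (y^2)/36)| = y^2/36 := by
      rw [abs_div, abs_neg, abs_of_nonneg hy2]; norm_num
    calc |(t - (1 - y/3)) + (- (y^2)/36)| ≤ |t - (1 - y/3)| + |(- (y^2)/36)| := abs_add_le _ _
      _ ≤ y^2/6 + y^2/36 := by rw [habs4]; linarith
      _ ≤ 7/36 * y^2 := by linarith
  have hfinal : |Real.sqrt t - (1 - y/6)| * (5/6) ≤ 7/36 * y^2 := by
    calc |Real.sqrt t - (1 - y/6)| * (5/6) ≤ |Real.sqrt t - (1 - y/6)| * (Real.sqrt t + (1 - y/6)) := by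
          exact mul_le_mul_of_nonneg_left (by linarith) (abs_nonneg _)
      _ = |t - (1 - y/6)^2| := hkey
      _ ≤ 7/36 * y^2 := htb
  linarith

/-- Fourth-order Taylor remainder estimate for the Whitham dispersion symbol
`l(x) = (tanh x / x)^{1/2}` near 0. -/
theorem whitham_symbol_taylor_fourth_order :
    ∃ C : ℝ, 0 < C ∧ ∀ x : ℝ, 0 < |x| → |x| < 1 →
      |Real.sqrt (Real.tanh x / x) - (1 - x ^ 2 / 6)| ≤ C * x ^ 4 := by
  refine ⟨1, one_pos, fun x hx0 hx1 => ?_⟩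
  have hne : x ≠ 0 := by
    intro h; rw [h, abs_zero] at hx0; exact lt_irrefl 0 hx0
  have hxle : |x| ≤ 1 := hx1.le
  have h := tanh_taylor x hxle
  have hdiv : |Real.tanh x / x - (1 - x^2/3)| ≤ (x^2)^2/6 := by
    have heq : Real.tanh x / x - (1 - x^2/3) = (Real.tanh x - (x - x^3/3))/x := by
      field_simp
    rw [heq, abs_div, div_le_iff₀ hx0]
    calc |Real.tanh x - (x - x^3/3)| ≤ |x|^5/6 := h
      _ = (x^2)^2/6 * |x| := by
          have h54 : |x|^5 = |x|^4 * |x| := by ring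
          rw [h54, ← abs_pow, abs_of_nonneg (by positivity : (0:ℝ) ≤ x^4)]
          ring
  have ht0 : 0 ≤ Real.tanh x / x := by
    rcases lt_or_gt_of_ne hne with hneg | hpos
    · refine le_of_lt (div_pos_of_neg_of_neg ?_ hneg)
      rw [Real.tanh_eq_sinh_div_cosh]
      exact div_neg_of_neg_of_pos (Real.sinh_neg_iff.mpr hneg) (Real.cosh_pos x)
    · refine le_of_lt (div_pos ?_ hpos)
      rw [Real.tanh_eq_sinh_div_cosh]
      exact div_pos (Real.sinh_pos_iff.mpr hpos) (Real.cosh_pos x)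
  have hx2 : x^2 ≤ 1 := by
    have hal := abs_lt.mp hx1
    nlinarith
  have hmain := sqrt_step (Real.tanh x / x) (x^2) ht0 (sq_nonneg x) hx2
    (by simpa using hdiv)
  calc |Real.sqrt (Real.tanh x / x) - (1 - x ^ 2 / 6)| ≤ (x^2)^2 := hmain
    _ = 1 * x^4 := by ring
end

section
/- For all ε > 0 and ξ ∈ ℝ with √ε·|ξ| ≤ 1, one has |l(√ε·ξ)·ξ - (ξ - (ε/6)·ξ^3)| ≤ C·ε²·|ξ|^5 for some constant C independent of ε and ξ, where l(x) = (tanh(x)/x)^{1/2} (extended by l(0)=1). -/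
open Real Set

/-- Helper: a function vanishing at `0` with nonnegative derivative on `(0,1)`
is nonnegative on `[0,1]`. -/
lemma nonneg_of_deriv_aux {f f' : ℝ → ℝ} (hf : ∀ x, HasDerivAt f (f' x) x)
    (h0 : f 0 = 0) (hpos : ∀ x ∈ Set.Ioo (0:ℝ) 1, 0 ≤ f' x) :
    ∀ x ∈ Set.Icc (0:ℝ) 1, 0 ≤ f x := by
  intro x hx
  have hmono : MonotoneOn f (Set.Icc 0 1) := by
    apply monotoneOn_of_deriv_nonneg (convex_Icc 0 1)
      (fun y _ => (hf y).continuousAt.continuousWithinAt)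
      (fun y _ => (hf y).differentiableAt.differentiableWithinAt)
    intro y hy
    rw [interior_Icc] at hy
    rw [(hf y).deriv]
    exact hpos y hy
  have h := hmono (Set.left_mem_Icc.2 one_pos.le) hx hx.1
  rw [h0] at h
  exact h

lemma sinh_le_mul_cosh : ∀ x ∈ Set.Icc (0:ℝ) 1, Real.sinh x ≤ x * Real.cosh x := by
  have h := nonneg_of_deriv_aux (f := fun x => x * Real.cosh x - Real.sinh x)
    (f' := fun x => x * Real.sinh x)
    (fun x => by
      have : HasDerivAt (fun x => x * Real.cosh x - Real.sinh x)
          (1 * Real.cosh x + x * Real.sinh x - Real.cosh x) x :=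
        ((hasDerivAt_id x).mul (Real.hasDerivAt_cosh x)).sub (Real.hasDerivAt_sinh x)
      convert this using 1; ring)
    (by simp)
    (fun x hx => mul_nonneg hx.1.le (Real.sinh_nonneg_iff.2 hx.1.le))
  intro x hx
  have := h x hx
  linarith

lemma tanh_taylor_lower : ∀ x ∈ Set.Icc (0:ℝ) 1,
    (x - x ^ 3 / 3) * Real.cosh x ≤ Real.sinh x := by
  have h := nonneg_of_deriv_aux
    (f := fun x => Real.sinh x - (x - x ^ 3 / 3) * Real.cosh x)
    (f' := fun x => x ^ 2 * Real.cosh x - (x - x ^ 3 / 3) * Real.sinh x)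
    (fun x => by
      have : HasDerivAt (fun x => Real.sinh x - (x - x ^ 3 / 3) * Real.cosh x)
          (Real.cosh x - ((1 - 3 * x ^ 2 / 3) * Real.cosh x
            + (x - x ^ 3 / 3) * Real.sinh x)) x := by
        refine (Real.hasDerivAt_sinh x).sub (HasDerivAt.mul ?_ (Real.hasDerivAt_cosh x))
        have := ((hasDerivAt_id x).sub (((hasDerivAt_pow 3 x)).div_const 3))
        simpa [Pi.sub_def, Pi.add_def] using this
      convert this using 1; ring)
    (by simp)
    (fun x hx => by
      obtain ⟨hx0, hx1⟩ := hx
      have hs : Real.sinh x ≤ x * Real.cosh x :=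
        sinh_le_mul_cosh x ⟨hx0.le, hx1.le⟩
      have hsp : 0 ≤ Real.sinh x := Real.sinh_nonneg_iff.2 hx0.le
      have hc : 0 < Real.cosh x := Real.cosh_pos x
      nlinarith [sq_nonneg x, mul_nonneg hsp (sq_nonneg x)])
  intro x hx
  have := h x hx
  linarith

lemma tanh_taylor_upper : ∀ x ∈ Set.Icc (0:ℝ) 1,
    Real.sinh x ≤ (x - x ^ 3 / 3 + 2 * x ^ 5 / 15) * Real.cosh x := by
  have h := nonneg_of_deriv_aux
    (f := fun x => (x - x ^ 3 / 3 + 2 * x ^ 5 / 15) * Real.cosh x - Real.sinh x)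
    (f' := fun x => (2 * x ^ 4 / 3 - x ^ 2) * Real.cosh x
      + (x - x ^ 3 / 3 + 2 * x ^ 5 / 15) * Real.sinh x)
    (fun x => by
      have hp : HasDerivAt (fun x => x - x ^ 3 / 3 + 2 * x ^ 5 / 15)
          (1 - 3 * x ^ 2 / 3 + 2 * (5 * x ^ 4) / 15) x := by
        have := (((hasDerivAt_id x).sub ((hasDerivAt_pow 3 x).div_const 3)).add
          (((hasDerivAt_pow 5 x).const_mul 2).div_const 15))
        simpa [Pi.sub_def, Pi.add_def] using this
      have : HasDerivAt
          (fun x => (x - x ^ 3 / 3 + 2 * x ^ 5 / 15) * Real.cosh x - Real.sinh x)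
          ((1 - 3 * x ^ 2 / 3 + 2 * (5 * x ^ 4) / 15) * Real.cosh x
            + (x - x ^ 3 / 3 + 2 * x ^ 5 / 15) * Real.sinh x - Real.cosh x) x :=
        (hp.mul (Real.hasDerivAt_cosh x)).sub (Real.hasDerivAt_sinh x)
      convert this using 1; ring)
    (by simp)
    (fun x hx => by
      obtain ⟨hx0, hx1⟩ := hx
      have hlow : (x - x ^ 3 / 3) * Real.cosh x ≤ Real.sinh x :=
        tanh_taylor_lower x ⟨hx0.le, hx1.le⟩
      have hc : 0 < Real.cosh x := Real.cosh_pos x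
      have hx2 : x ^ 2 ≤ 1 := by nlinarith
      have hx3 : x ^ 3 ≤ x := by nlinarith [mul_nonneg hx0.le (by linarith : (0:ℝ) ≤ 1 - x ^ 2)]
      have hppos : 0 ≤ x - x ^ 3 / 3 + 2 * x ^ 5 / 15 := by
        have : (0:ℝ) ≤ 2 * x ^ 5 / 15 := by positivity
        linarith
      have key : (x - x ^ 3 / 3 + 2 * x ^ 5 / 15) * ((x - x ^ 3 / 3) * Real.cosh x)
          ≤ (x - x ^ 3 / 3 + 2 * x ^ 5 / 15) * Real.sinh x :=
        mul_le_mul_of_nonneg_left hlow hppos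
      nlinarith [mul_pos (mul_pos (pow_pos hx0 6) hc)
        (by nlinarith : (0:ℝ) < 11 / 45 - 2 * x ^ 2 / 45)])
  intro x hx
  have := h x hx
  linarith

/-- Pure arithmetic part of the key estimate. -/
lemma sqrt_est (x t : ℝ) (hx0 : 0 < x) (hx1 : x ≤ 1)
    (ht_low : 1 - x ^ 2 / 3 ≤ t) (ht_upp : t ≤ 1 - x ^ 2 / 3 + 2 * x ^ 4 / 15) :
    |Real.sqrt t - (1 - x ^ 2 / 6)| ≤ x ^ 4 := by
  have hx2 : x ^ 2 ≤ 1 := by nlinarith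
  have hx4 : x ^ 4 ≤ x ^ 2 := by nlinarith [sq_nonneg x]
  have ht_le_one : t ≤ 1 := by linarith
  have ht_pos : 0 < t := by nlinarith
  set u := t - 1 with hu
  have hu_low : -(x ^ 2 / 3) ≤ u := by simp only [hu]; linarith
  have hu_upp : u ≤ -(x ^ 2 / 3) + 2 * x ^ 4 / 15 := by simp only [hu]; linarith
  have hu_np : u ≤ 0 := by linarith
  have hu_ge : -(1/3 : ℝ) ≤ u := by nlinarith
  have htu : t = 1 + u := by simp [hu]
  -- upper bound for sqrt
  have hsu : Real.sqrt t ≤ 1 + u / 2 := by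
    have h1 : t ≤ (1 + u / 2) ^ 2 := by nlinarith [sq_nonneg u]
    calc Real.sqrt t ≤ Real.sqrt ((1 + u / 2) ^ 2) := Real.sqrt_le_sqrt h1
      _ = 1 + u / 2 := Real.sqrt_sq (by nlinarith)
  -- lower bound for sqrt
  have hsl : 1 + u / 2 - u ^ 2 / 2 ≤ Real.sqrt t := by
    have h1 : (1 + u / 2 - u ^ 2 / 2) ^ 2 ≤ t := by
      have h2 : u ^ 2 ≤ 1 / 9 := by nlinarith
      have h3 : u ^ 4 ≤ u ^ 2 / 9 := by nlinarith [sq_nonneg u]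
      have h4 : -u ^ 3 ≤ u ^ 2 / 3 := by nlinarith [sq_nonneg u]
      nlinarith [sq_nonneg u]
    calc 1 + u / 2 - u ^ 2 / 2 ≤ |1 + u / 2 - u ^ 2 / 2| := le_abs_self _
      _ = Real.sqrt ((1 + u / 2 - u ^ 2 / 2) ^ 2) := (Real.sqrt_sq_eq_abs _).symm
      _ ≤ Real.sqrt t := Real.sqrt_le_sqrt h1
  have hu_sq : u ^ 2 ≤ x ^ 4 / 9 := by nlinarith
  rw [abs_le]
  have hx4n : (0:ℝ) ≤ x ^ 4 := by positivity
  constructor <;> linarith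

/-- Key estimate: for `0 < x ≤ 1`, `|√(tanh x / x) - (1 - x²/6)| ≤ x⁴`. -/
lemma whitham_key (x : ℝ) (hx0 : 0 < x) (hx1 : x ≤ 1) :
    |Real.sqrt (Real.tanh x / x) - (1 - x ^ 2 / 6)| ≤ x ^ 4 := by
  have hc : 0 < Real.cosh x := Real.cosh_pos x
  have hlow := tanh_taylor_lower x ⟨hx0.le, hx1⟩
  have hupp := tanh_taylor_upper x ⟨hx0.le, hx1⟩
  have htanh : Real.tanh x = Real.sinh x / Real.cosh x := Real.tanh_eq_sinh_div_cosh x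
  have ht_low : 1 - x ^ 2 / 3 ≤ Real.tanh x / x := by
    rw [htanh, div_div, le_div_iff₀ (by positivity)]
    nlinarith
  have ht_upp : Real.tanh x / x ≤ 1 - x ^ 2 / 3 + 2 * x ^ 4 / 15 := by
    rw [htanh, div_div, div_le_iff₀ (by positivity)]
    nlinarith
  exact sqrt_est x _ hx0 hx1 ht_low ht_upp

/-- The Whitham dispersion symbol `l(x) = (tanh x / x)^{1/2}`, extended by `l 0 = 1`. -/
noncomputable def whithamSymbol (x : ℝ) : ℝ :=
  if x = 0 then 1 else Real.sqrt (Real.tanh x / x)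

/-- Comparison between the Whitham symbol `l(√ε ξ) ξ` and the KdV dispersion
`ξ - (ε/6) ξ³` in the long-wave regime `√ε |ξ| ≤ 1`. -/
theorem whitham_kdv_symbol_comparison_low_freq :
    ∃ C : ℝ, 0 < C ∧ ∀ ε ξ : ℝ, 0 < ε → Real.sqrt ε * |ξ| ≤ 1 →
      |whithamSymbol (Real.sqrt ε * ξ) * ξ - (ξ - ε / 6 * ξ ^ 3)| ≤ C * ε ^ 2 * |ξ| ^ 5 := by
  refine ⟨1, one_pos, fun ε ξ hε hreg => ?_⟩
  rcases eq_or_ne ξ 0 with rfl | hξ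
  · simp [whithamSymbol]
  · have hsε : 0 < Real.sqrt ε := Real.sqrt_pos.2 hε
    set x := Real.sqrt ε * ξ with hxdef
    have hxne : x ≠ 0 := mul_ne_zero hsε.ne' hξ
    set y := Real.sqrt ε * |ξ| with hydef
    have hy0 : 0 < y := mul_pos hsε (abs_pos.2 hξ)
    have hyx : y = |x| := by
      rw [hxdef, hydef, abs_mul, abs_of_nonneg hsε.le]
    -- the symbol is even
    have hsymb : whithamSymbol x = Real.sqrt (Real.tanh y / y) := by
      rw [whithamSymbol, if_neg hxne, hyx]
      rcases le_or_gt 0 x with h | h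
      · rw [abs_of_nonneg h]
      · rw [abs_of_neg h, Real.tanh_neg, neg_div_neg_eq]
    have hy2 : y ^ 2 = ε * ξ ^ 2 := by
      rw [hydef, mul_pow, Real.sq_sqrt hε.le, sq_abs]
    have hy4 : y ^ 4 = ε ^ 2 * ξ ^ 4 := by
      have : y ^ 4 = (y ^ 2) ^ 2 := by ring
      rw [this, hy2]; ring
    have hkey := whitham_key y hy0 hreg
    rw [hsymb]
    have heq : Real.sqrt (Real.tanh y / y) * ξ - (ξ - ε / 6 * ξ ^ 3)
        = (Real.sqrt (Real.tanh y / y) - (1 - y ^ 2 / 6)) * ξ := by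
      rw [hy2]; ring
    rw [heq, abs_mul]
    calc |Real.sqrt (Real.tanh y / y) - (1 - y ^ 2 / 6)| * |ξ|
        ≤ y ^ 4 * |ξ| := mul_le_mul_of_nonneg_right hkey (abs_nonneg ξ)
      _ = 1 * ε ^ 2 * |ξ| ^ 5 := by
          rw [hy4]
          have : ξ ^ 4 = |ξ| ^ 4 := by rw [← abs_pow, abs_of_nonneg (by positivity)]
          rw [this]; ring
end

section
/- Let φ ∈ H^{j+7}(ℝ), ε > 0, and let u(t) = e^{-t(∂_x + (ε/6)∂_x³)}φ and v(t) = e^{-t l(√ε D)∂_x}φ be the solutions of the Airy equation ∂_t u + ∂_x u + (ε/6)∂_x³u = 0 and of the linear Whitham equation ∂_t v + l(√ε D)∂_x v = 0 with the same datum φ. Then for each j ≥ 0 there is a constant N_j depending only on ‖φ‖_{H^{j+7}} such that ‖∂_x^j(u - v)(t)‖_{L^∞} ≤ N_j·ε²·(1 + t) for all t ≥ 0. -/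
open MeasureTheory Complex

private lemma hasDerivAt_tanh' (x : ℝ) : HasDerivAt Real.tanh (1 - Real.tanh x ^ 2) x := by
  have hc := Real.cosh_pos x
  have h := (Real.hasDerivAt_sinh x).div (Real.hasDerivAt_cosh x) hc.ne'
  have heq : Real.tanh = fun y => Real.sinh y / Real.cosh y :=
    funext fun y => Real.tanh_eq_sinh_div_cosh y
  rw [heq]
  refine HasDerivAt.congr_deriv (f := fun y => Real.sinh y / Real.cosh y) h ?_
  show _ = 1 - (Real.sinh x / Real.cosh x) ^ 2
  have h2 := Real.cosh_sq_sub_sinh_sq x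
  field_simp

private lemma nonneg_of_deriv {f f' : ℝ → ℝ} (hf : ∀ y, HasDerivAt f (f' y) y)
    (h0 : f 0 = 0) {x : ℝ} (hx : 0 ≤ x)
    (hd : ∀ y, 0 ≤ y → y ≤ x → 0 ≤ f' y) : 0 ≤ f x := by
  have hcont : Continuous f := by
    have : Differentiable ℝ f := fun y => (hf y).differentiableAt
    exact this.continuous
  have hmono := monotoneOn_of_deriv_nonneg (convex_Icc 0 x) hcont.continuousOn
    (fun y hy => ((hf y).differentiableAt.differentiableWithinAt))
    (fun y hy => by
      rw [interior_Icc] at hy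
      rw [(hf y).deriv]
      exact hd y hy.1.le hy.2.le)
  have := hmono (Set.left_mem_Icc.2 hx) (Set.right_mem_Icc.2 hx) hx
  rwa [h0] at this

private lemma tanh_nonneg' {x : ℝ} (hx : 0 ≤ x) : 0 ≤ Real.tanh x := by
  rw [Real.tanh_eq_sinh_div_cosh]
  exact div_nonneg (Real.sinh_nonneg_iff.2 hx) (Real.cosh_pos x).le

private lemma tanh_le_id {x : ℝ} (hx : 0 ≤ x) : Real.tanh x ≤ x := by
  have h := nonneg_of_deriv (f := fun y => y - Real.tanh y)
    (f' := fun y => 1 - (1 - Real.tanh y ^ 2))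
    (fun y => (hasDerivAt_id y).sub (hasDerivAt_tanh' y))
    (by simp [Real.tanh_zero]) hx
    (fun y _ _ => by nlinarith [sq_nonneg (Real.tanh y)])
  linarith

private lemma tanh_ge_cubic {x : ℝ} (hx : 0 ≤ x) : x - x ^ 3 / 3 ≤ Real.tanh x := by
  have h := nonneg_of_deriv (f := fun y => Real.tanh y - (y - y ^ 3 / 3))
    (f' := fun y => (1 - Real.tanh y ^ 2) - (1 - (3 * y ^ 2) / 3))
    (fun y => (hasDerivAt_tanh' y).sub
      (((hasDerivAt_id y).sub ((hasDerivAt_pow 3 y).div_const 3)).congr_deriv (by ring)))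
    (by simp [Real.tanh_zero]) hx
    (fun y hy _ => by nlinarith [tanh_le_id hy, tanh_nonneg' hy])
  linarith

private lemma tanh_le_quintic {x : ℝ} (hx : 0 ≤ x) (hx1 : x ≤ 1) :
    Real.tanh x ≤ x - x ^ 3 / 3 + 2 / 15 * x ^ 5 := by
  have h := nonneg_of_deriv (f := fun y => (y - y ^ 3 / 3 + 2 / 15 * y ^ 5) - Real.tanh y)
    (f' := fun y => (1 - (3 * y ^ 2) / 3 + 2 / 15 * (5 * y ^ 4)) - (1 - Real.tanh y ^ 2))
    (fun y => ((((hasDerivAt_id y).sub ((hasDerivAt_pow 3 y).div_const 3)).add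
        ((hasDerivAt_pow 5 y).const_mul (2 / 15))).sub (hasDerivAt_tanh' y)).congr_deriv
        (by push_cast; ring))
    (by simp [Real.tanh_zero]) hx
    (fun y hy hyx => by
      have h1 := tanh_ge_cubic hy
      have h2 : y ≤ 1 := hyx.trans hx1
      have hsq : y ^ 2 ≤ 1 := by nlinarith
      have h3 : 0 ≤ y - y ^ 3 / 3 := by nlinarith [mul_le_mul_of_nonneg_left hsq hy]
      have hsq2 : (y - y ^ 3 / 3) ^ 2 ≤ Real.tanh y ^ 2 := pow_le_pow_left₀ h3 h1 2
      nlinarith [hsq2, pow_nonneg hy 6])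
  linarith


private lemma whithamSymbol_neg (x : ℝ) : whithamSymbol (-x) = whithamSymbol x := by
  unfold whithamSymbol
  by_cases h : x = 0
  · simp [h]
  · rw [if_neg (neg_ne_zero.2 h), if_neg h, Real.tanh_neg, neg_div_neg_eq]

private lemma whitham_taylor_pos {x : ℝ} (hx : 0 < x) (hx1 : x ≤ 1) :
    |whithamSymbol x - (1 - x ^ 2 / 6)| ≤ x ^ 4 / 5 := by
  have hne : x ≠ 0 := hx.ne'
  rw [whithamSymbol, if_neg hne]
  set g : ℝ := Real.tanh x / x with hg
  have hg1 : 1 - x ^ 2 / 3 ≤ g := by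
    rw [hg, le_div_iff₀ hx]
    nlinarith [tanh_ge_cubic hx.le]
  have hg2 : g ≤ 1 - x ^ 2 / 3 + 2 / 15 * x ^ 4 := by
    rw [hg, div_le_iff₀ hx]
    nlinarith [tanh_le_quintic hx.le hx1]
  have hgpos : 0 ≤ g := by nlinarith
  set l : ℝ := Real.sqrt g with hl
  have hl0 : 0 ≤ l := Real.sqrt_nonneg g
  have hlsq : l ^ 2 = g := Real.sq_sqrt hgpos
  have hs : (5:ℝ) / 6 ≤ 1 - x ^ 2 / 6 := by nlinarith
  rw [abs_le]
  constructor
  · nlinarith [sq_nonneg x, sq_nonneg (x^2)]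
  · nlinarith [sq_nonneg x, sq_nonneg (x^2)]

private lemma whitham_taylor {x : ℝ} (hx : |x| ≤ 1) :
    |whithamSymbol x - (1 - x ^ 2 / 6)| ≤ x ^ 4 / 5 := by
  rcases lt_trichotomy x 0 with h | h | h
  · have := whitham_taylor_pos (x := -x) (by linarith) (by rw [abs_of_neg h] at hx; linarith)
    rw [whithamSymbol_neg, show (-x)^2 = x^2 by ring, show (-x)^4 = x^4 by ring] at this
    exact this
  · simp [h, whithamSymbol]
  · exact whitham_taylor_pos h (by rwa [abs_of_pos h] at hx)

private lemma norm_exp_I_sub_one (θ : ℝ) : ‖Complex.exp (I * θ) - 1‖ ≤ |θ| := by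
  have h1 : Complex.exp (I * θ) = Complex.cos θ + Complex.sin θ * I := by
    rw [mul_comm, Complex.exp_mul_I]
  have hsq : ‖Complex.exp (I * θ) - 1‖ ^ 2 ≤ θ ^ 2 := by
    rw [h1, ← Complex.ofReal_cos, ← Complex.ofReal_sin, Complex.sq_norm,
      Complex.normSq_apply]
    simp only [Complex.add_re, Complex.sub_re, Complex.ofReal_re, Complex.mul_re,
      Complex.I_re, Complex.I_im, Complex.ofReal_im, Complex.add_im, Complex.sub_im,
      Complex.mul_im, Complex.one_re, Complex.one_im]
    have hc := Real.one_sub_sq_div_two_le_cos (x := θ)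
    have hs := Real.sin_sq_add_cos_sq θ
    nlinarith
  have := Real.sqrt_le_sqrt hsq
  rwa [Real.sqrt_sq (norm_nonneg _), Real.sqrt_sq_eq_abs] at this

private lemma norm_exp_I_sub (a b : ℝ) :
    ‖Complex.exp (I * a) - Complex.exp (I * b)‖ ≤ |a - b| := by
  have hfac : Complex.exp (I * a) - Complex.exp (I * b)
      = Complex.exp (I * b) * (Complex.exp (I * ((a : ℝ) - b : ℝ)) - 1) := by
    rw [mul_sub, mul_one, ← Complex.exp_add]
    push_cast
    ring_nf
  rw [hfac, norm_mul]
  have h1 : ‖Complex.exp (I * b)‖ = 1 := by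
    rw [Complex.norm_exp]
    simp
  rw [h1, one_mul]
  exact norm_exp_I_sub_one _

private lemma continuous_tanh' : Continuous Real.tanh := by
  have heq : Real.tanh = fun y => Real.sinh y / Real.cosh y :=
    funext fun y => Real.tanh_eq_sinh_div_cosh y
  rw [heq]
  exact Real.continuous_sinh.div Real.continuous_cosh fun y => (Real.cosh_pos y).ne'

private lemma measurable_whithamSymbol : Measurable whithamSymbol := by
  unfold whithamSymbol
  refine Measurable.ite ?_ measurable_const ?_
  · simpa [Set.setOf_eq_eq_singleton] using measurableSet_singleton (0 : ℝ)
  · exact Real.continuous_sqrt.measurable.comp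
      (continuous_tanh'.measurable.div measurable_id)

private lemma norm_exp_I (r : ℝ) : ‖Complex.exp (I * (r : ℂ))‖ = 1 := by
  rw [Complex.norm_exp]
  simp

private lemma amgm_weight (j : ℕ) (ξ : ℝ) (c : ℝ) (hc : 0 ≤ c) :
    |ξ| ^ j * (1 + ξ ^ 2) ^ 3 * c ≤
      ((1 + ξ ^ 2)⁻¹ + (1 + ξ ^ 2) ^ ((j : ℝ) + 7) * c ^ 2) / 2 := by
  set A : ℝ := 1 + ξ ^ 2 with hA
  have hA0 : 0 < A := by positivity
  have habs : |ξ| ^ j ≤ A ^ ((j : ℝ) / 2) := by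
    calc |ξ| ^ j ≤ Real.sqrt A ^ j := by
          refine pow_le_pow_left₀ (abs_nonneg _) ?_ j
          rw [← Real.sqrt_sq_eq_abs]
          exact Real.sqrt_le_sqrt (by nlinarith)
      _ = (A ^ ((1 : ℝ) / 2)) ^ j := by rw [Real.sqrt_eq_rpow]
      _ = A ^ ((j : ℝ) / 2) := by
          rw [← Real.rpow_natCast (A ^ ((1 : ℝ) / 2)) j, ← Real.rpow_mul hA0.le]
          ring_nf
  have h3 : A ^ (3 : ℕ) = A ^ ((3 : ℝ)) := by
    rw [show ((3:ℝ)) = ((3 : ℕ) : ℝ) by norm_num, Real.rpow_natCast]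
  have step1 : |ξ| ^ j * A ^ (3:ℕ) * c ≤ A ^ (((j : ℝ) + 6) / 2) * c := by
    have : A ^ ((j : ℝ) / 2) * A ^ ((3 : ℝ)) = A ^ (((j : ℝ) + 6) / 2) := by
      rw [← Real.rpow_add hA0]; ring_nf
    rw [h3]
    calc |ξ| ^ j * A ^ ((3:ℝ)) * c ≤ A ^ ((j : ℝ) / 2) * A ^ ((3:ℝ)) * c := by
          have h30 : (0:ℝ) ≤ A ^ ((3:ℝ)) := (Real.rpow_nonneg hA0.le _)
          exact mul_le_mul_of_nonneg_right (mul_le_mul_of_nonneg_right habs h30) hc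
      _ = A ^ (((j : ℝ) + 6) / 2) * c := by rw [this]
  have step2 : A ^ (((j : ℝ) + 6) / 2) * c
      = A ^ (-(1 : ℝ) / 2) * (A ^ (((j : ℝ) + 7) / 2) * c) := by
    rw [← mul_assoc, ← Real.rpow_add hA0]; ring_nf
  have step3 : A ^ (-(1 : ℝ) / 2) * (A ^ (((j : ℝ) + 7) / 2) * c)
      ≤ ((A ^ (-(1 : ℝ) / 2)) ^ 2 + (A ^ (((j : ℝ) + 7) / 2) * c) ^ 2) / 2 := by
    nlinarith [sq_nonneg (A ^ (-(1 : ℝ) / 2) - A ^ (((j : ℝ) + 7) / 2) * c)]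
  have hsq1 : (A ^ (-(1 : ℝ) / 2)) ^ 2 = A⁻¹ := by
    rw [← Real.rpow_natCast (A ^ (-(1 : ℝ) / 2)) 2, ← Real.rpow_mul hA0.le]
    norm_num [Real.rpow_neg_one]
  have hsq2 : (A ^ (((j : ℝ) + 7) / 2) * c) ^ 2 = A ^ ((j : ℝ) + 7) * c ^ 2 := by
    rw [mul_pow, ← Real.rpow_natCast (A ^ (((j : ℝ) + 7) / 2)) 2, ← Real.rpow_mul hA0.le]
    ring_nf
  calc |ξ| ^ j * A ^ (3:ℕ) * c ≤ A ^ (-(1 : ℝ) / 2) * (A ^ (((j : ℝ) + 7) / 2) * c) := by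
        rw [← step2]; exact step1
    _ ≤ ((A ^ (-(1 : ℝ) / 2)) ^ 2 + (A ^ (((j : ℝ) + 7) / 2) * c) ^ 2) / 2 := step3
    _ = (A⁻¹ + A ^ ((j : ℝ) + 7) * c ^ 2) / 2 := by rw [hsq1, hsq2]

private lemma phase_diff_bound {ε t : ℝ} (hε : 0 < ε) (ht : 0 ≤ t) (x ξ : ℝ) :
    ‖Complex.exp (I * ((x * ξ - t * (ξ - ε / 6 * ξ ^ 3) : ℝ) : ℂ)) -
      Complex.exp (I * ((x * ξ - t * (whithamSymbol (Real.sqrt ε * ξ) * ξ) : ℝ) : ℂ))‖ ≤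
      3 * ε ^ 2 * (1 + t) * (1 + ξ ^ 2) ^ 3 := by
  have hsq : Real.sqrt ε ^ 2 = ε := Real.sq_sqrt hε.le
  set y : ℝ := Real.sqrt ε * ξ with hy
  have hy2 : y ^ 2 = ε * ξ ^ 2 := by rw [hy, mul_pow, hsq]
  have hy4 : y ^ 4 = ε ^ 2 * ξ ^ 4 := by
    rw [show y ^ 4 = (y ^ 2) ^ 2 by ring, hy2]; ring
  by_cases h : ε * ξ ^ 2 ≤ 1
  · -- low frequency
    have hyle : |y| ≤ 1 := by
      have h2 : y ^ 2 ≤ 1 := by rw [hy2]; exact h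
      have := Real.sqrt_le_sqrt h2
      rwa [Real.sqrt_sq_eq_abs, Real.sqrt_one] at this
    have hw := whitham_taylor hyle
    refine (norm_exp_I_sub _ _).trans ?_
    have hdiff : (x * ξ - t * (ξ - ε / 6 * ξ ^ 3)) - (x * ξ - t * (whithamSymbol y * ξ))
        = t * (ξ * (whithamSymbol y - (1 - y ^ 2 / 6))) := by rw [hy2]; ring
    rw [hdiff, abs_mul, abs_mul, _root_.abs_of_nonneg ht]
    have hb : |ξ| * |whithamSymbol y - (1 - y ^ 2 / 6)| ≤ |ξ| * (y ^ 4 / 5) :=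
      mul_le_mul_of_nonneg_left hw (abs_nonneg ξ)
    have h5 : |ξ| ^ 5 ≤ 15 * (1 + ξ ^ 2) ^ 3 := by
      rw [show (1 + ξ^2) = 1 + |ξ|^2 by rw [_root_.sq_abs]]
      nlinarith [mul_nonneg (pow_nonneg (abs_nonneg ξ) 4) (sq_nonneg (|ξ| - 1)),
        abs_nonneg ξ, pow_nonneg (abs_nonneg ξ) 4, pow_nonneg (abs_nonneg ξ) 6,
        pow_nonneg (abs_nonneg ξ) 2]
    have hkey : |ξ| * (y ^ 4 / 5) = ε ^ 2 * |ξ| ^ 5 / 5 := by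
      rw [hy4, show |ξ| ^ 5 = |ξ| * ξ ^ 4 by
        rw [show |ξ| ^ 5 = |ξ| * |ξ| ^ 4 by ring, ← _root_.abs_pow, _root_.abs_of_nonneg (by positivity : (0:ℝ) ≤ ξ ^ 4)]]
      ring
    calc t * (|ξ| * |whithamSymbol y - (1 - y ^ 2 / 6)|) ≤ t * (ε ^ 2 * |ξ| ^ 5 / 5) := by
          rw [← hkey]; exact mul_le_mul_of_nonneg_left hb ht
      _ ≤ (1 + t) * (ε ^ 2 * (15 * (1 + ξ ^ 2) ^ 3) / 5) := by
          nlinarith [mul_le_mul_of_nonneg_left h5 (mul_nonneg (sq_nonneg ε) ht),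
            mul_nonneg (sq_nonneg ε) (pow_nonneg (by positivity : (0:ℝ) ≤ 1 + ξ ^ 2) 3)]
      _ = 3 * ε ^ 2 * (1 + t) * (1 + ξ ^ 2) ^ 3 := by ring
  · -- high frequency
    push_neg at h
    have h1 : 1 ≤ ε ^ 2 * ξ ^ 4 := by nlinarith [hε.le]
    have h2 : ξ ^ 4 ≤ (1 + ξ ^ 2) ^ 3 := by nlinarith [sq_nonneg ξ, pow_nonneg (sq_nonneg ξ) 3]
    refine (norm_sub_le _ _).trans ?_
    rw [norm_exp_I, norm_exp_I]
    nlinarith [mul_le_mul_of_nonneg_left h2 (sq_nonneg ε), sq_nonneg ε, ht,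
      mul_nonneg (mul_nonneg (sq_nonneg ε) ht) (pow_nonneg (by positivity : (0:ℝ) ≤ 1 + ξ^2) 3)]

private lemma not_integrable_aux {φhat : ℝ → ℂ}
    (hm : ¬ AEStronglyMeasurable φhat (volume : Measure ℝ)) {g : ℝ → ℂ}
    (hg : Measurable g) (hgne : ∀ ξ : ℝ, ξ ≠ 0 → g ξ ≠ 0) :
    ¬ Integrable (fun ξ => g ξ * φhat ξ) := by
  intro hInt
  apply hm
  have h0 : ∀ᵐ ξ : ℝ, ξ ≠ (0 : ℝ) := by
    rw [MeasureTheory.ae_iff]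
    simpa using Real.volume_singleton
  have haesm : AEStronglyMeasurable (fun ξ => (g ξ)⁻¹ * (g ξ * φhat ξ)) (volume : Measure ℝ) :=
    (hg.inv.aestronglyMeasurable).mul hInt.aestronglyMeasurable
  exact haesm.congr (h0.mono fun ξ hξ => by dsimp only; rw [inv_mul_cancel_left₀ (hgne ξ hξ)])

/-- Comparison between the linear KdV (Airy) and linear Whitham evolutions, written on
the Fourier side: for a datum `φ` with Fourier transform `φhat` in `H^{j+7}`, the `j`-th
derivatives of the two solutions differ in `L^∞` by at most `N_j(‖φ‖_{H^{j+7}}) ε² (1+t)`.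
Here `∂_x^j u(x,t) = ∫ (iξ)^j e^{i(xξ - t(ξ - εξ³/6))} φhat(ξ) dξ` and
`∂_x^j v(x,t) = ∫ (iξ)^j e^{i(xξ - t l(√εξ)ξ)} φhat(ξ) dξ`. -/
theorem linear_whitham_kdv_comparison (j : ℕ) :
    ∃ Nf : ℝ → ℝ, ∀ ε : ℝ, 0 < ε → ∀ φhat : ℝ → ℂ,
      Integrable (fun ξ : ℝ => (1 + ξ ^ 2) ^ ((j : ℝ) + 7) * ‖φhat ξ‖ ^ 2) →
      ∀ t : ℝ, 0 ≤ t → ∀ x : ℝ,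
        ‖(∫ ξ : ℝ, (I * (ξ : ℂ)) ^ j *
              Complex.exp (I * ((x : ℂ) * ξ - (t : ℂ) * ((ξ : ℂ) - (ε : ℂ) / 6 * (ξ : ℂ) ^ 3))) *
              φhat ξ) -
          (∫ ξ : ℝ, (I * (ξ : ℂ)) ^ j *
              Complex.exp (I * ((x : ℂ) * ξ -
                (t : ℂ) * ((whithamSymbol (Real.sqrt ε * ξ) : ℂ) * (ξ : ℂ)))) *
              φhat ξ)‖ ≤
          Nf (Real.sqrt (∫ ξ : ℝ, (1 + ξ ^ 2) ^ ((j : ℝ) + 7) * ‖φhat ξ‖ ^ 2)) *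
            ε ^ 2 * (1 + t) := by
  refine ⟨fun s => 3 * (Real.pi + s ^ 2) / 2, ?_⟩
  intro ε hε φhat hInt t ht x
  set A : ℝ := ∫ ξ : ℝ, (1 + ξ ^ 2) ^ ((j : ℝ) + 7) * ‖φhat ξ‖ ^ 2 with hAdef
  have hA0 : 0 ≤ A := integral_nonneg fun ξ => by positivity
  set K₀ : ℝ → ℝ :=
    fun ξ => ((1 + ξ ^ 2)⁻¹ + (1 + ξ ^ 2) ^ ((j : ℝ) + 7) * ‖φhat ξ‖ ^ 2) / 2 with hK₀def
  have hK₀int : Integrable K₀ := (integrable_inv_one_add_sq.add hInt).div_const 2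
  have hK₀val : ∫ ξ : ℝ, K₀ ξ = (Real.pi + A) / 2 := by
    rw [hK₀def]
    rw [MeasureTheory.integral_div, MeasureTheory.integral_add integrable_inv_one_add_sq hInt,
      integral_univ_inv_one_add_sq]
  -- canonical forms of the phases
  have harg₁ : ∀ ξ : ℝ, I * ((x : ℂ) * ξ - (t : ℂ) * ((ξ : ℂ) - (ε : ℂ) / 6 * (ξ : ℂ) ^ 3))
      = I * (((x * ξ - t * (ξ - ε / 6 * ξ ^ 3) : ℝ)) : ℂ) := fun ξ => by push_cast; ring
  have harg₂ : ∀ ξ : ℝ, I * ((x : ℂ) * ξ -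
        (t : ℂ) * ((whithamSymbol (Real.sqrt ε * ξ) : ℂ) * (ξ : ℂ)))
      = I * (((x * ξ - t * (whithamSymbol (Real.sqrt ε * ξ) * ξ) : ℝ)) : ℂ) :=
    fun ξ => by push_cast; ring
  set g₁ : ℝ → ℂ := fun ξ => (I * (ξ : ℂ)) ^ j *
    Complex.exp (I * ((x : ℂ) * ξ - (t : ℂ) * ((ξ : ℂ) - (ε : ℂ) / 6 * (ξ : ℂ) ^ 3))) with hg₁def
  set g₂ : ℝ → ℂ := fun ξ => (I * (ξ : ℂ)) ^ j *
    Complex.exp (I * ((x : ℂ) * ξ -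
      (t : ℂ) * ((whithamSymbol (Real.sqrt ε * ξ) : ℂ) * (ξ : ℂ)))) with hg₂def
  have hng : ∀ ξ : ℝ, ‖(I * (ξ : ℂ)) ^ j‖ = |ξ| ^ j := by
    intro ξ
    rw [norm_pow, norm_mul, Complex.norm_I, one_mul, Complex.norm_real, Real.norm_eq_abs]
  -- measurability of the coefficient functions
  have hg₁m : Measurable g₁ := by
    rw [hg₁def]; fun_prop
  have hwm : Measurable fun ξ : ℝ => whithamSymbol (Real.sqrt ε * ξ) :=
    measurable_whithamSymbol.comp (measurable_id.const_mul _)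
  have hg₂m : Measurable g₂ := by
    rw [hg₂def]
    apply Measurable.mul
    · fun_prop
    · apply Complex.measurable_exp.comp
      apply Measurable.const_mul
      apply Measurable.sub
      · fun_prop
      · exact ((Complex.measurable_ofReal.comp hwm).mul
          (Complex.measurable_ofReal.comp measurable_id)).const_mul _
  -- norms of the coefficients
  have hng₁ : ∀ ξ : ℝ, ‖g₁ ξ‖ = |ξ| ^ j := by
    intro ξ
    rw [hg₁def]; dsimp only
    rw [norm_mul, hng, harg₁ ξ, norm_exp_I, mul_one]
  have hng₂ : ∀ ξ : ℝ, ‖g₂ ξ‖ = |ξ| ^ j := by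
    intro ξ
    rw [hg₂def]; dsimp only
    rw [norm_mul, hng, harg₂ ξ, norm_exp_I, mul_one]
  have hcube : ∀ ξ : ℝ, (1 : ℝ) ≤ (1 + ξ ^ 2) ^ 3 := by
    intro ξ; nlinarith [sq_nonneg ξ, sq_nonneg (ξ ^ 2), sq_nonneg (ξ ^ 3)]
  have hbound : ∀ (g : ℝ → ℂ), (∀ ξ : ℝ, ‖g ξ‖ = |ξ| ^ j) →
      ∀ ξ : ℝ, ‖g ξ * φhat ξ‖ ≤ K₀ ξ := by
    intro g hg ξ
    calc ‖g ξ * φhat ξ‖ = |ξ| ^ j * 1 * ‖φhat ξ‖ := by rw [norm_mul, hg, mul_one]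
      _ ≤ |ξ| ^ j * (1 + ξ ^ 2) ^ 3 * ‖φhat ξ‖ := by
          have h1 := hcube ξ
          have h2 : (0:ℝ) ≤ |ξ| ^ j := pow_nonneg (abs_nonneg ξ) j
          nlinarith [norm_nonneg (φhat ξ), mul_nonneg h2 (norm_nonneg (φhat ξ))]
      _ ≤ K₀ ξ := amgm_weight j ξ _ (norm_nonneg _)
  have hdiffb : ∀ ξ : ℝ, ‖g₁ ξ * φhat ξ - g₂ ξ * φhat ξ‖ ≤ 3 * ε ^ 2 * (1 + t) * K₀ ξ := by
    intro ξ
    have hfac : g₁ ξ * φhat ξ - g₂ ξ * φhat ξ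
        = (I * (ξ : ℂ)) ^ j *
          (Complex.exp (I * ((x * ξ - t * (ξ - ε / 6 * ξ ^ 3) : ℝ) : ℂ)) -
            Complex.exp (I * ((x * ξ - t * (whithamSymbol (Real.sqrt ε * ξ) * ξ) : ℝ) : ℂ))) *
          φhat ξ := by
      rw [hg₁def, hg₂def]; dsimp only
      rw [harg₁ ξ, harg₂ ξ]; ring
    rw [hfac, norm_mul, norm_mul, hng]
    have hp := phase_diff_bound hε ht x ξ
    calc |ξ| ^ j * ‖Complex.exp (I * ((x * ξ - t * (ξ - ε / 6 * ξ ^ 3) : ℝ) : ℂ)) -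
            Complex.exp (I * ((x * ξ - t * (whithamSymbol (Real.sqrt ε * ξ) * ξ) : ℝ) : ℂ))‖ *
            ‖φhat ξ‖
        ≤ |ξ| ^ j * (3 * ε ^ 2 * (1 + t) * (1 + ξ ^ 2) ^ 3) * ‖φhat ξ‖ := by
          have h2 : (0:ℝ) ≤ |ξ| ^ j := pow_nonneg (abs_nonneg ξ) j
          exact mul_le_mul_of_nonneg_right (mul_le_mul_of_nonneg_left hp h2) (norm_nonneg _)
      _ = 3 * ε ^ 2 * (1 + t) * (|ξ| ^ j * (1 + ξ ^ 2) ^ 3 * ‖φhat ξ‖) := by ring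
      _ ≤ 3 * ε ^ 2 * (1 + t) * K₀ ξ := by
          refine mul_le_mul_of_nonneg_left (amgm_weight j ξ _ (norm_nonneg _)) ?_
          positivity
  have e1 : (∫ ξ : ℝ, (I * (ξ : ℂ)) ^ j *
        Complex.exp (I * ((x : ℂ) * ξ - (t : ℂ) * ((ξ : ℂ) - (ε : ℂ) / 6 * (ξ : ℂ) ^ 3))) *
        φhat ξ) = ∫ ξ : ℝ, g₁ ξ * φhat ξ := rfl
  have e2 : (∫ ξ : ℝ, (I * (ξ : ℂ)) ^ j *
        Complex.exp (I * ((x : ℂ) * ξ -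
          (t : ℂ) * ((whithamSymbol (Real.sqrt ε * ξ) : ℂ) * (ξ : ℂ)))) *
        φhat ξ) = ∫ ξ : ℝ, g₂ ξ * φhat ξ := rfl
  show _ ≤ 3 * (Real.pi + Real.sqrt A ^ 2) / 2 * ε ^ 2 * (1 + t)
  rw [Real.sq_sqrt hA0]
  by_cases hm : AEStronglyMeasurable φhat (volume : Measure ℝ)
  · have hF₁i : Integrable (fun ξ => g₁ ξ * φhat ξ) :=
      hK₀int.mono' (hg₁m.aestronglyMeasurable.mul hm) (ae_of_all _ (hbound g₁ hng₁))
    have hF₂i : Integrable (fun ξ => g₂ ξ * φhat ξ) :=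
      hK₀int.mono' (hg₂m.aestronglyMeasurable.mul hm) (ae_of_all _ (hbound g₂ hng₂))
    rw [e1, e2, ← MeasureTheory.integral_sub hF₁i hF₂i]
    refine (norm_integral_le_integral_norm _).trans ?_
    have h2 := integral_mono_of_nonneg (ae_of_all _ fun ξ => norm_nonneg _)
      (hK₀int.const_mul (3 * ε ^ 2 * (1 + t))) (ae_of_all _ hdiffb)
    refine h2.trans ?_
    rw [MeasureTheory.integral_const_mul, hK₀val]
    exact le_of_eq (by ring)
  · have hne : ∀ (c : ℝ → ℂ), (∀ ξ : ℝ, ξ ≠ 0 → c ξ ≠ 0) → True := fun _ _ => trivial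
    have hnz₁ : ∀ ξ : ℝ, ξ ≠ 0 → g₁ ξ ≠ 0 := by
      intro ξ hξ
      rw [hg₁def]; dsimp only
      exact mul_ne_zero (pow_ne_zero _ (mul_ne_zero I_ne_zero (Complex.ofReal_ne_zero.2 hξ)))
        (Complex.exp_ne_zero _)
    have hnz₂ : ∀ ξ : ℝ, ξ ≠ 0 → g₂ ξ ≠ 0 := by
      intro ξ hξ
      rw [hg₂def]; dsimp only
      exact mul_ne_zero (pow_ne_zero _ (mul_ne_zero I_ne_zero (Complex.ofReal_ne_zero.2 hξ)))
        (Complex.exp_ne_zero _)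
    rw [e1, e2, MeasureTheory.integral_undef (not_integrable_aux hm hg₁m hnz₁),
      MeasureTheory.integral_undef (not_integrable_aux hm hg₂m hnz₂), sub_zero, norm_zero]
    positivity
end
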